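/- Let n ≡ 11 mod 24 be a positive integer and let O = ℤ[θ] where θ has minimal polynomial x² − x + (n+1)/4. Then the unit group (O/8O)* is isomorphic to ℤ/12ℤ × ℤ/2ℤ × ℤ/2ℤ. -/

import Mathlib

open Polynomial

@[ext] structure Rc (c : ZMod 8) where
  x : ZMod 8
  y : ZMod 8
deriving DecidableEq, Fintype

namespace Rc
variable {c : ZMod 8}

instance : Add (Rc c) := ⟨fun a b => ⟨a.x + b.x, a.y + b.y⟩⟩
instance : Mul (Rc c) := ⟨fun a b => ⟨a.x*b.x - c*(a.y*b.y), a.x*b.y + a.y*b.x + a.y*b.y⟩⟩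
instance : Neg (Rc c) := ⟨fun a => ⟨-a.x, -a.y⟩⟩
instance : Zero (Rc c) := ⟨⟨0, 0⟩⟩
instance : One (Rc c) := ⟨⟨1, 0⟩⟩

@[simp] lemma add_x (a b : Rc c) : (a + b).x = a.x + b.x := rfl
@[simp] lemma add_y (a b : Rc c) : (a + b).y = a.y + b.y := rfl
@[simp] lemma mul_x (a b : Rc c) : (a * b).x = a.x*b.x - c*(a.y*b.y) := rfl
@[simp] lemma mul_y (a b : Rc c) : (a * b).y = a.x*b.y + a.y*b.x + a.y*b.y := rfl
@[simp] lemma neg_x (a : Rc c) : (-a).x = -a.x := rfl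
@[simp] lemma neg_y (a : Rc c) : (-a).y = -a.y := rfl
@[simp] lemma zero_x : (0 : Rc c).x = 0 := rfl
@[simp] lemma zero_y : (0 : Rc c).y = 0 := rfl
@[simp] lemma one_x : (1 : Rc c).x = 1 := rfl
@[simp] lemma one_y : (1 : Rc c).y = 0 := rfl

instance : CommRing (Rc c) where
  add_assoc a b d := by ext <;> (simp; ring)
  zero_add a := by ext <;> simp
  add_zero a := by ext <;> simp
  add_comm a b := by ext <;> (simp; ring)
  neg_add_cancel a := by ext <;> simp
  mul_assoc a b d := by ext <;> (simp; ring)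
  one_mul a := by ext <;> simp
  mul_one a := by ext <;> simp
  left_distrib a b d := by ext <;> (simp; ring)
  right_distrib a b d := by ext <;> (simp; ring)
  mul_comm a b := by ext <;> (simp; ring)
  zero_mul a := by ext <;> simp
  mul_zero a := by ext <;> simp
  nsmul n a := ⟨n • a.x, n • a.y⟩
  nsmul_zero a := by ext <;> exact AddMonoid.nsmul_zero _
  nsmul_succ n a := by ext <;> exact AddMonoid.nsmul_succ _ _
  zsmul n a := ⟨n • a.x, n • a.y⟩
  zsmul_zero' a := by ext <;> exact SubNegMonoid.zsmul_zero' _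
  zsmul_succ' n a := by ext <;> exact SubNegMonoid.zsmul_succ' _ _
  zsmul_neg' n a := by ext <;> exact SubNegMonoid.zsmul_neg' _ _

@[simp] lemma sub_x (a b : Rc c) : (a - b).x = a.x - b.x := by
  rw [sub_eq_add_neg, sub_eq_add_neg]; simp
@[simp] lemma sub_y (a b : Rc c) : (a - b).y = a.y - b.y := by
  rw [sub_eq_add_neg, sub_eq_add_neg]; simp

/-- The canonical embedding `ZMod 8 →+* Rc c`. -/
def toRc : ZMod 8 →+* Rc c where
  toFun a := ⟨a, 0⟩
  map_one' := rfl
  map_mul' a b := by ext <;> simp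
  map_zero' := rfl
  map_add' a b := by ext <;> simp

@[simp] lemma toRc_x (a : ZMod 8) : (toRc a : Rc c).x = a := rfl
@[simp] lemma toRc_y (a : ZMod 8) : (toRc a : Rc c).y = 0 := rfl

lemma eight_eq_zero : (8 : Rc c) = 0 := by
  have h : (8 : Rc c) = toRc (8 : ZMod 8) := (map_ofNat (toRc (c := c)) 8).symm
  have h8 : (8 : ZMod 8) = 0 := rfl
  rw [h, h8, map_zero]

end Rc

/-! ### The unit group of `Rc (2*d+1)` -/

def u1 (d : ZMod 8) : (Rc (2*d+1))ˣ :=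
  ⟨⟨2*d+1, 1⟩, ⟨-1-(2*d+1), 3+2*(2*d+1)⟩, by revert d; decide, by revert d; decide⟩

def u2 (d : ZMod 8) : (Rc (2*d+1))ˣ := ⟨⟨1, 4⟩, ⟨1, 4⟩, by revert d; decide, by revert d; decide⟩
def u3 (d : ZMod 8) : (Rc (2*d+1))ˣ := ⟨⟨3, 0⟩, ⟨3, 0⟩, by revert d; decide, by revert d; decide⟩

def F (d : ZMod 8) (p : ZMod 12 × ZMod 2 × ZMod 2) : (Rc (2*d+1))ˣ :=
  u1 d ^ p.1.val * u2 d ^ p.2.1.val * u3 d ^ p.2.2.val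

set_option maxHeartbeats 1000000 in
lemma u_orders : ∀ d : ZMod 8, u1 d ^ 12 = 1 ∧ u2 d ^ 2 = 1 ∧ u3 d ^ 2 = 1 := by decide

lemma F_add (d : ZMod 8) (p q : ZMod 12 × ZMod 2 × ZMod 2) :
    F d (p + q) = F d p * F d q := by
  obtain ⟨h1, h2, h3⟩ := u_orders d
  unfold F
  have e1 : u1 d ^ (p.1 + q.1).val = u1 d ^ p.1.val * u1 d ^ q.1.val := by
    rw [ZMod.val_add, ← pow_eq_pow_mod _ h1, pow_add]
  have e2 : u2 d ^ (p.2.1 + q.2.1).val = u2 d ^ p.2.1.val * u2 d ^ q.2.1.val := by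
    rw [ZMod.val_add, ← pow_eq_pow_mod _ h2, pow_add]
  have e3 : u3 d ^ (p.2.2 + q.2.2).val = u3 d ^ p.2.2.val * u3 d ^ q.2.2.val := by
    rw [ZMod.val_add, ← pow_eq_pow_mod _ h3, pow_add]
  show u1 d ^ (p.1 + q.1).val * u2 d ^ (p.2.1 + q.2.1).val * u3 d ^ (p.2.2 + q.2.2).val = _
  rw [e1, e2, e3]
  generalize u1 d ^ p.1.val = A
  generalize u1 d ^ q.1.val = A'
  generalize u2 d ^ p.2.1.val = B
  generalize u2 d ^ q.2.1.val = B'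
  generalize u3 d ^ p.2.2.val = C
  generalize u3 d ^ q.2.2.val = C'
  simp only [mul_assoc, mul_left_comm, mul_comm]

def φ (d : ZMod 8) : Multiplicative (ZMod 12 × ZMod 2 × ZMod 2) →* (Rc (2*d+1))ˣ where
  toFun p := F d p.toAdd
  map_one' := by
    show F d 0 = 1
    simp [F]
  map_mul' p q := F_add d _ _

set_option maxHeartbeats 4000000 in
set_option maxRecDepth 100000 in
lemma F_ker : ∀ d : ZMod 8, ∀ p : ZMod 12 × ZMod 2 × ZMod 2, F d p = 1 → p = 0 := by decide

set_option maxHeartbeats 8000000 in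
set_option maxRecDepth 1000000 in
lemma card_units : ∀ d : ZMod 8, Fintype.card (Rc (2*d+1))ˣ = 48 := by decide

lemma φ_bijective (d : ZMod 8) : Function.Bijective (φ d) := by
  rw [Fintype.bijective_iff_injective_and_card]
  constructor
  · rw [injective_iff_map_eq_one]
    intro p hp
    exact F_ker d p.toAdd hp
  · rw [card_units d]
    decide


/-! ### ring equivalence -/
set_option synthInstance.maxHeartbeats 400000
section RingSide

abbrev Qr (m : ℤ) := (ℤ[X] ⧸ Ideal.span {(X ^ 2 - X + C m : ℤ[X])}) ⧸
    Ideal.span {(8 : ℤ[X] ⧸ Ideal.span {(X ^ 2 - X + C m : ℤ[X])})}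

def ev (c : ZMod 8) : ℤ[X] →+* Rc c := eval₂RingHom (Int.castRingHom (Rc c)) ⟨0, 1⟩

lemma ev_f (m : ℤ) (c : ZMod 8) (hcm : (m : ZMod 8) = c) :
    ev c (X ^ 2 - X + C m : ℤ[X]) = 0 := by
  have hmc : ((m : ℤ) : Rc c) = Rc.toRc c := by rw [← hcm, map_intCast]
  have hθ : (⟨0, 1⟩ : Rc c) ^ 2 = ⟨-c, 1⟩ := by rw [sq]; ext <;> simp
  simp only [ev, coe_eval₂RingHom, eval₂_add, eval₂_sub, eval₂_pow, eval₂_X, eval₂_C]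
  rw [show (Int.castRingHom (Rc c)) m = ((m : ℤ) : Rc c) from rfl, hmc, hθ]
  ext <;> simp

noncomputable def ψ1 (m : ℤ) (c : ZMod 8) (hcm : (m : ZMod 8) = c) :
    (ℤ[X] ⧸ Ideal.span {(X ^ 2 - X + C m : ℤ[X])}) →+* Rc c :=
  Ideal.Quotient.lift _ (ev c) (by
    intro a ha
    rw [Ideal.mem_span_singleton] at ha
    obtain ⟨b, rfl⟩ := ha
    rw [map_mul, ev_f m c hcm, zero_mul])

noncomputable def ψ (m : ℤ) (c : ZMod 8) (hcm : (m : ZMod 8) = c) : Qr m →+* Rc c :=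
  Ideal.Quotient.lift _ (ψ1 m c hcm) (by
    intro a ha
    rw [Ideal.mem_span_singleton] at ha
    obtain ⟨b, rfl⟩ := ha
    rw [map_mul]
    have h8 : (ψ1 m c hcm) (8 : ℤ[X] ⧸ Ideal.span {(X ^ 2 - X + C m : ℤ[X])}) = (8 : Rc c) :=
      map_ofNat (ψ1 m c hcm) 8
    rw [h8, Rc.eight_eq_zero, zero_mul])

noncomputable def tQ (m : ℤ) : Qr m := Ideal.Quotient.mk _ (Ideal.Quotient.mk _ X)

lemma eight_Q (m : ℤ) : ((8 : ℕ) : Qr m) = 0 := by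
  have h : ((8 : ℕ) : Qr m) = Ideal.Quotient.mk _ (8 : ℤ[X] ⧸ Ideal.span {(X ^ 2 - X + C m : ℤ[X])}) := by
    push_cast
    rfl
  rw [h, Ideal.Quotient.eq_zero_iff_mem]
  exact Ideal.mem_span_singleton_self _

noncomputable def eQ (m : ℤ) : ZMod 8 →+* Qr m :=
  haveI := ringChar.charP (Qr m)
  ZMod.castHom (ringChar.dvd (eight_Q m)) (Qr m)

lemma htQ (m : ℤ) : (tQ m) ^ 2 - tQ m + ((m : ℤ) : Qr m) = 0 := by
  have h0 : (Ideal.Quotient.mk (Ideal.span {(X ^ 2 - X + C m : ℤ[X])}) (X ^ 2 - X + C m : ℤ[X])) = 0 := by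
    rw [Ideal.Quotient.eq_zero_iff_mem]; exact Ideal.mem_span_singleton_self _
  have h1 : (Ideal.Quotient.mk _ (Ideal.Quotient.mk (Ideal.span {(X ^ 2 - X + C m : ℤ[X])}) (X ^ 2 - X + C m : ℤ[X])) : Qr m) = 0 := by
    rw [h0, map_zero]
  calc (tQ m) ^ 2 - tQ m + ((m : ℤ) : Qr m)
      = Ideal.Quotient.mk _ (Ideal.Quotient.mk _ (X ^ 2 - X + C m : ℤ[X])) := by
        simp only [tQ, map_add, map_sub, map_pow]
        congr 1
    _ = 0 := h1

noncomputable def χ (m : ℤ) (c : ZMod 8) (hcm : (m : ZMod 8) = c) : Rc c →+* Qr m where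
  toFun a := eQ m a.x + eQ m a.y * tQ m
  map_one' := by simp; exact zero_mul (tQ m)
  map_zero' := by simp; exact zero_mul (tQ m)
  map_add' a b := by simp only [Rc.add_x, Rc.add_y, map_add]; ring
  map_mul' a b := by
    have hec : eQ m c = ((m : ℤ) : Qr m) := by rw [← hcm, map_intCast]
    simp only [Rc.mul_x, Rc.mul_y, map_add, map_sub, map_mul, hec]
    linear_combination (-(eQ m a.y * eQ m b.y)) * htQ m

lemma ψ_t (m : ℤ) (c : ZMod 8) (hcm : (m : ZMod 8) = c) : ψ m c hcm (tQ m) = ⟨0, 1⟩ := by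
  simp only [ψ, ψ1, tQ, Ideal.Quotient.lift_mk]
  simp [ev]

lemma ψ_e (m : ℤ) (c : ZMod 8) (hcm : (m : ZMod 8) = c) (a : ZMod 8) :
    ψ m c hcm (eQ m a) = Rc.toRc a := by
  have h : (ψ m c hcm).comp (eQ m) = Rc.toRc := RingHom.ext_zmod _ _
  calc ψ m c hcm (eQ m a) = ((ψ m c hcm).comp (eQ m)) a := rfl
    _ = Rc.toRc a := by rw [h]

noncomputable def E (m : ℤ) (c : ZMod 8) (hcm : (m : ZMod 8) = c) : Qr m ≃+* Rc c where
  toFun := ψ m c hcm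
  invFun := χ m c hcm
  map_mul' := map_mul _
  map_add' := map_add _
  left_inv q := by
    have hcomp : (χ m c hcm).comp (ψ m c hcm) = RingHom.id (Qr m) := by
      apply Ideal.Quotient.ringHom_ext
      apply Ideal.Quotient.ringHom_ext
      apply Polynomial.ringHom_ext'
      · exact RingHom.ext_int _ _
      · show (χ m c hcm) ((ψ m c hcm) (tQ m)) = tQ m
        rw [ψ_t m c hcm]
        show eQ m 0 + eQ m 1 * tQ m = tQ m
        simp
        exact one_mul (tQ m)
    calc (χ m c hcm) ((ψ m c hcm) q) = ((χ m c hcm).comp (ψ m c hcm)) q := rfl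
      _ = q := by rw [hcomp]; rfl
  right_inv a := by
    show ψ m c hcm (eQ m a.x + eQ m a.y * tQ m) = a
    rw [map_add, map_mul, ψ_t m c hcm, ψ_e m c hcm, ψ_e m c hcm]
    ext <;> simp

end RingSide


theorem units_mod_eight (n : ℕ) (hn : n % 24 = 11) :
    Nonempty
      ((((ℤ[X] ⧸ Ideal.span {(X ^ 2 - X + C (((n : ℤ) + 1) / 4) : ℤ[X])}) ⧸
          Ideal.span {(8 : ℤ[X] ⧸ Ideal.span {(X ^ 2 - X + C (((n : ℤ) + 1) / 4) : ℤ[X])})})ˣ) ≃*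
        Multiplicative (ZMod 12 × ZMod 2 × ZMod 2)) := by
  obtain ⟨k, hk⟩ : ∃ k : ℕ, n = 24 * k + 11 := ⟨n / 24, by omega⟩
  have hm' : ((n : ℤ) + 1) / 4 = 6 * (k : ℤ) + 3 := by
    have hnk : (n : ℤ) = 24 * (k : ℤ) + 11 := by exact_mod_cast congrArg (Nat.cast (R := ℤ)) hk
    rw [hnk]
    omega
  have hcm : ((((n : ℤ) + 1) / 4 : ℤ) : ZMod 8) = 2 * (3 * (k : ZMod 8) + 1) + 1 := by
    rw [hm']
    push_cast
    ring
  exact ⟨(Units.mapEquiv (E (((n : ℤ) + 1) / 4) (2 * (3 * (k : ZMod 8) + 1) + 1) hcm).toMulEquiv).trans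
    ((MulEquiv.ofBijective (φ (3 * (k : ZMod 8) + 1)) (φ_bijective (3 * (k : ZMod 8) + 1))).symm)⟩
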